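/- arXiv:1609.00452 — 2 statements merged into one kernel-verified Lean document; each statement's English description precedes it below -/
import Mathlib

section
/- (Welch bound) For any K unit-norm vectors s_1,...,s_K in ℂ^L with K > L, the mutual coherence satisfies μ := max_{i≠j} |s_iᴴ s_j| ≥ √((K−L)/((K−1)L)). -/
private lemma swap4 {α β : Type*} [Fintype α] [Fintype β] (g : α → α → β → β → ℂ) :
    ∑ a, ∑ b, ∑ i, ∑ j, g a b i j = ∑ i, ∑ j, ∑ a, ∑ b, g a b i j := by
  calc ∑ a, ∑ b, ∑ i, ∑ j, g a b i j
      = ∑ a, ∑ i, ∑ b, ∑ j, g a b i j :=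
        Finset.sum_congr rfl fun a _ => Finset.sum_comm
    _ = ∑ i, ∑ a, ∑ b, ∑ j, g a b i j := Finset.sum_comm
    _ = ∑ i, ∑ a, ∑ j, ∑ b, g a b i j :=
        Finset.sum_congr rfl fun i _ => Finset.sum_congr rfl fun a _ => Finset.sum_comm
    _ = ∑ i, ∑ j, ∑ a, ∑ b, g a b i j :=
        Finset.sum_congr rfl fun i _ => Finset.sum_comm

/-- Hermitian dot product of two finite complex vectors. -/
noncomputable def cdot {ι : Type*} [Fintype ι] (a b : ι → ℂ) : ℂ :=
  ∑ t, star (a t) * b t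

/-- Mutual coherence of a family of K columns. -/
noncomputable def mutualCoherence {ι : Type*} [Fintype ι] {K : ℕ}
    (s : Fin K → ι → ℂ) : ℝ :=
  sSup {x : ℝ | ∃ i j : Fin K, i ≠ j ∧ x = ‖cdot (s i) (s j)‖}

/-- Welch bound: for K > L unit-norm vectors in ℂ^L,
`μ ≥ √((K−L)/((K−1)L))`. -/
theorem welch_bound {L K : ℕ} (hLK : L < K) (hL : 1 ≤ L)
    (s : Fin K → Fin L → ℂ)
    (hnorm : ∀ i, cdot (s i) (s i) = 1) :
    Real.sqrt (((K : ℝ) - L) / (((K : ℝ) - 1) * L)) ≤ mutualCoherence s := by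
  classical
  have hK2 : 2 ≤ K := by omega
  set μ := mutualCoherence s with hμdef
  set G : Fin K → Fin K → ℂ := fun i j => cdot (s i) (s j) with hGdef
  have hbdd : BddAbove {x : ℝ | ∃ i j : Fin K, i ≠ j ∧ x = ‖cdot (s i) (s j)‖} := by
    apply Set.Finite.bddAbove
    apply Set.Finite.subset
      (Set.finite_range (fun p : Fin K × Fin K => ‖cdot (s p.1) (s p.2)‖))
    rintro x ⟨i, j, -, rfl⟩
    exact ⟨(i, j), rfl⟩
  have hle : ∀ i j : Fin K, i ≠ j → ‖G i j‖ ≤ μ := fun i j hij =>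
    le_csSup hbdd ⟨i, j, hij, rfl⟩
  have hμ0 : 0 ≤ μ := by
    have h01 : (⟨0, by omega⟩ : Fin K) ≠ ⟨1, by omega⟩ := by
      simp [Fin.ext_iff]
    exact le_trans (norm_nonneg _) (hle _ _ h01)
  -- squared column norms per coordinate
  have hnorm' : ∀ i, ∑ a, Complex.normSq (s i a) = 1 := by
    intro i
    have h1 := hnorm i
    unfold cdot at h1
    have h2 : (((∑ a, Complex.normSq (s i a)) : ℝ) : ℂ) = 1 := by
      push_cast
      rw [← h1]
      refine Finset.sum_congr rfl fun t _ => ?_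
      rw [Complex.star_def, mul_comm, Complex.mul_conj]
    exact_mod_cast h2
  set f : Fin L → ℝ := fun a => ∑ i, Complex.normSq (s i a) with hfdef
  have hfsum : ∑ a, f a = (K : ℝ) := by
    rw [hfdef]
    rw [Finset.sum_comm]
    simp [hnorm']
  set A : Fin L → Fin L → ℂ := fun a b => ∑ i, s i a * (starRingEnd ℂ) (s i b) with hAdef
  have hAdiag : ∀ a, (A a a) = ((f a : ℝ) : ℂ) := by
    intro a
    rw [hAdef, hfdef]
    push_cast
    exact Finset.sum_congr rfl fun i _ => (Complex.mul_conj _)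
  -- the key double-sum identity
  have hkey : ∑ a, ∑ b, Complex.normSq (A a b) = ∑ i, ∑ j, Complex.normSq (G i j) := by
    have hC : ((∑ a, ∑ b, Complex.normSq (A a b) : ℝ) : ℂ)
        = ((∑ i, ∑ j, Complex.normSq (G i j) : ℝ) : ℂ) := by
      push_cast
      simp_rw [← Complex.mul_conj]
      have e1 : ∀ a b : Fin L, A a b * (starRingEnd ℂ) (A a b)
          = ∑ i, ∑ j, (s i a * (starRingEnd ℂ) (s i b)) *
              ((starRingEnd ℂ) (s j a) * s j b) := by
        intro a b
        rw [hAdef]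
        simp only [map_sum, map_mul, RingHom.id_apply, Complex.conj_conj]
        rw [Finset.sum_mul_sum]
      have e2 : ∀ i j : Fin K, G i j * (starRingEnd ℂ) (G i j)
          = ∑ a, ∑ b, ((starRingEnd ℂ) (s i a) * s j a) *
              (s i b * (starRingEnd ℂ) (s j b)) := by
        intro i j
        rw [hGdef]
        unfold cdot
        simp only [Complex.star_def, map_sum, map_mul, Complex.conj_conj]
        rw [Finset.sum_mul_sum]
      simp_rw [e1, e2]
      rw [swap4, Finset.sum_comm]
      refine Finset.sum_congr rfl fun i _ => Finset.sum_congr rfl fun j _ =>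
        Finset.sum_congr rfl fun a _ => Finset.sum_congr rfl fun b _ => by ring
    exact_mod_cast hC
  -- Cauchy-Schwarz: K^2 ≤ L * total
  have hCS : (K : ℝ) ^ 2 ≤ (L : ℝ) * ∑ i, ∑ j, Complex.normSq (G i j) := by
    have h1 : ((K : ℝ)) ^ 2 = (∑ a, f a) ^ 2 := by rw [hfsum]
    have h2 : (∑ a, f a) ^ 2 ≤ (Finset.univ.card : ℝ) * ∑ a, f a ^ 2 :=
      sq_sum_le_card_mul_sum_sq
    have h3 : ∑ a, f a ^ 2 ≤ ∑ a, ∑ b, Complex.normSq (A a b) := by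
      refine Finset.sum_le_sum fun a _ => ?_
      have : f a ^ 2 = Complex.normSq (A a a) := by
        rw [hAdiag a, Complex.normSq_ofReal, sq]
      rw [this]
      exact Finset.single_le_sum (fun b _ => Complex.normSq_nonneg _) (Finset.mem_univ a)
    rw [h1, ← hkey]
    calc (∑ a, f a) ^ 2 ≤ (Finset.univ.card : ℝ) * ∑ a, f a ^ 2 := h2
      _ = (L : ℝ) * ∑ a, f a ^ 2 := by simp
      _ ≤ (L : ℝ) * ∑ a, ∑ b, Complex.normSq (A a b) := by
          exact mul_le_mul_of_nonneg_left h3 (by positivity)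
  -- split diagonal
  have hsplit : ∑ i, ∑ j, Complex.normSq (G i j)
      = (K : ℝ) + ∑ i, ∑ j ∈ Finset.univ.erase i, Complex.normSq (G i j) := by
    have : ∀ i : Fin K, ∑ j, Complex.normSq (G i j)
        = 1 + ∑ j ∈ Finset.univ.erase i, Complex.normSq (G i j) := by
      intro i
      rw [← Finset.add_sum_erase _ _ (Finset.mem_univ i)]
      congr 1
      rw [hGdef]
      simp [hnorm i]
    simp_rw [this]
    rw [Finset.sum_add_distrib]
    simp
  -- off-diagonal bound
  have hoff : ∑ i, ∑ j ∈ Finset.univ.erase i, Complex.normSq (G i j)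
      ≤ (K : ℝ) * ((K : ℝ) - 1) * μ ^ 2 := by
    have hterm : ∀ i : Fin K, ∀ j ∈ Finset.univ.erase i, Complex.normSq (G i j) ≤ μ ^ 2 := by
      intro i j hj
      have hij : j ≠ i := Finset.ne_of_mem_erase hj
      rw [← Complex.sq_norm]
      exact pow_le_pow_left₀ (norm_nonneg _) (hle i j hij.symm) 2
    calc ∑ i, ∑ j ∈ Finset.univ.erase i, Complex.normSq (G i j)
        ≤ ∑ i : Fin K, ∑ _j ∈ Finset.univ.erase i, μ ^ 2 :=
          Finset.sum_le_sum fun i _ => Finset.sum_le_sum (hterm i)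
      _ = (K : ℝ) * ((K : ℝ) - 1) * μ ^ 2 := by
          simp [Finset.card_erase_of_mem, Finset.sum_const, nsmul_eq_mul]
          have : ((K - 1 : ℕ) : ℝ) = (K : ℝ) - 1 := by
            have : 1 ≤ K := by omega
            push_cast [this]
            ring
          rw [this]
          ring
  -- final algebra
  have hKpos : (0 : ℝ) < K := by positivity
  have hK1 : (0 : ℝ) < (K : ℝ) - 1 := by
    have : (2 : ℝ) ≤ (K : ℝ) := by exact_mod_cast hK2
    linarith
  have hLpos : (0 : ℝ) < L := by
    have : (1 : ℝ) ≤ (L : ℝ) := by exact_mod_cast hL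
    linarith
  have hmain : ((K : ℝ) - L) / (((K : ℝ) - 1) * L) ≤ μ ^ 2 := by
    rw [div_le_iff₀ (by positivity)]
    have h1 : (K : ℝ) ^ 2 ≤ (L : ℝ) * ((K : ℝ) + (K : ℝ) * ((K : ℝ) - 1) * μ ^ 2) := by
      calc (K : ℝ) ^ 2 ≤ (L : ℝ) * ∑ i, ∑ j, Complex.normSq (G i j) := hCS
        _ ≤ (L : ℝ) * ((K : ℝ) + (K : ℝ) * ((K : ℝ) - 1) * μ ^ 2) := by
            rw [hsplit]
            exact mul_le_mul_of_nonneg_left (by linarith [hoff]) (by positivity)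
    nlinarith [hKpos, h1]
  calc Real.sqrt (((K : ℝ) - L) / (((K : ℝ) - 1) * L))
      ≤ Real.sqrt (μ ^ 2) := Real.sqrt_le_sqrt hmain
    _ = μ := by rw [Real.sqrt_sq hμ0]
end

section
/- Let x_1,...,x_k and y_1,...,y_k be jointly independent zero-mean real Gaussian random variables where each x_i has variance σ_x² and each y_i has variance σ_y². Then for every t > 0, P(|Σ_{i=1}^k x_i y_i| ≥ t) ≤ 2 exp( − t² / (2 σ_x σ_y (2 σ_x σ_y k + t)) ). -/
open MeasureTheory ProbabilityTheory

open Real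
open scoped ENNReal NNReal

lemma G1_int {b : ℝ} (hb : 0 < b) (c : ℝ) :
    Integrable (fun x : ℝ => exp (-b * x ^ 2 + c * x)) := by
  have h : ∀ x : ℝ, -b * x ^ 2 + c * x = -b * (x - c/(2*b)) ^ 2 + c^2/(4*b) := by
    intro x; field_simp; ring
  simp_rw [h, exp_add]
  exact ((integrable_exp_neg_mul_sq hb).comp_sub_right (c/(2*b))).mul_const _

lemma G1_val {b : ℝ} (hb : 0 < b) (c : ℝ) :
    ∫ x : ℝ, exp (-b * x ^ 2 + c * x) = √(π / b) * exp (c^2/(4*b)) := by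
  have h : ∀ x : ℝ, -b * x ^ 2 + c * x = -b * (x - c/(2*b)) ^ 2 + c^2/(4*b) := by
    intro x; field_simp; ring
  simp_rw [h, exp_add]
  rw [integral_mul_const]
  congr 1
  rw [integral_sub_right_eq_self (fun x : ℝ => exp (-b * x ^ 2)) (c/(2*b))]
  exact integral_gaussian b

lemma gauss_density (v : ℝ≥0) :
    gaussianPDF 0 v = fun x => ((gaussianPDFReal 0 v x).toNNReal : ℝ≥0∞) := by
  ext x; rw [gaussianPDF_def]; rfl

lemma gauss_int_iff {v : ℝ≥0} (hv : v ≠ 0) (g : ℝ → ℝ) :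
    Integrable g (gaussianReal 0 v) ↔
      Integrable (fun x => gaussianPDFReal 0 v x * g x) volume := by
  rw [gaussianReal_of_var_ne_zero 0 hv, gauss_density,
    integrable_withDensity_iff_integrable_smul
      (measurable_gaussianPDFReal 0 v).real_toNNReal]
  refine integrable_congr (Filter.Eventually.of_forall fun x => ?_)
  simp [NNReal.smul_def, Real.coe_toNNReal _ (gaussianPDFReal_nonneg 0 v x)]

lemma gauss_integral {v : ℝ≥0} (hv : v ≠ 0) (g : ℝ → ℝ) :
    ∫ x, g x ∂(gaussianReal 0 v) = ∫ x, gaussianPDFReal 0 v x * g x := by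
  rw [gaussianReal_of_var_ne_zero 0 hv, gauss_density,
    integral_withDensity_eq_integral_smul
      (measurable_gaussianPDFReal 0 v).real_toNNReal]
  refine integral_congr_ae (Filter.Eventually.of_forall fun x => ?_)
  simp [NNReal.smul_def, Real.coe_toNNReal _ (gaussianPDFReal_nonneg 0 v x)]

lemma gauss_pdf_mul (v : ℝ≥0) (c d x : ℝ) :
    gaussianPDFReal 0 v x * exp (c * x ^ 2 + d * x)
      = (√(2 * π * v))⁻¹ * exp (-((2 * (v:ℝ))⁻¹ - c) * x ^ 2 + d * x) := by
  rw [gaussianPDFReal_def]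
  simp only [sub_zero]
  rw [mul_assoc, ← exp_add]
  congr 2
  ring

lemma vpos {v : ℝ≥0} (hv : v ≠ 0) : (0:ℝ) < v := by
  exact_mod_cast pos_iff_ne_zero.mpr hv

lemma bpos {v : ℝ≥0} (hv : v ≠ 0) {c : ℝ} (hc : 2 * c * v < 1) :
    0 < (2 * (v:ℝ))⁻¹ - c := by
  have hv' := vpos hv
  rw [sub_pos, show ((2*(v:ℝ))⁻¹) = 1/(2*v) by ring, lt_div_iff₀ (by positivity)]
  linarith

lemma gauss_quad_int {v : ℝ≥0} (hv : v ≠ 0) {c : ℝ} (d : ℝ) (hc : 2 * c * v < 1) :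
    Integrable (fun y => exp (c * y ^ 2 + d * y)) (gaussianReal 0 v) := by
  rw [gauss_int_iff hv]
  simp_rw [gauss_pdf_mul]
  exact (G1_int (bpos hv hc) d).const_mul _

lemma gauss_quad_val {v : ℝ≥0} (hv : v ≠ 0) {c : ℝ} (d : ℝ) (hc : 2 * c * v < 1) :
    ∫ y, exp (c * y ^ 2 + d * y) ∂(gaussianReal 0 v)
      = (√(1 - 2 * c * v))⁻¹ * exp (d ^ 2 * v / (2 * (1 - 2 * c * v))) := by
  have hv' := vpos hv
  have hb := bpos hv hc
  have hu : (0:ℝ) < 1 - 2 * c * v := by linarith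
  have h2v : (2 * (v:ℝ))⁻¹ - c = (1 - 2*c*v)/(2*v) := by field_simp
  rw [gauss_integral hv]
  simp_rw [gauss_pdf_mul]
  rw [integral_const_mul, G1_val hb d]
  have h1 : (√(2 * π * v))⁻¹ * √(π / ((2 * (v:ℝ))⁻¹ - c)) = (√(1 - 2 * c * v))⁻¹ := by
    have hπ := pi_pos
    have he : π / ((2 * (v:ℝ))⁻¹ - c) = (2 * π * v) / (1 - 2*c*v) := by
      rw [h2v]; field_simp
    rw [he, Real.sqrt_div (by positivity) _, div_eq_mul_inv, ← mul_assoc,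
      inv_mul_cancel₀ (ne_of_gt (Real.sqrt_pos.mpr (by positivity))), one_mul]
  have h2 : d ^ 2 / (4 * ((2 * (v:ℝ))⁻¹ - c)) = d ^ 2 * v / (2 * (1 - 2 * c * v)) := by
    rw [h2v, show (4:ℝ)*((1-2*c*(v:ℝ))/(2*(v:ℝ))) = (2*(1-2*c*(v:ℝ)))/(v:ℝ) by
      field_simp; ring, div_div_eq_mul_div]
  rw [← mul_assoc, h1, h2]

lemma toNNReal_sq_ne_zero {σ : ℝ} (hσ : 0 < σ) : (σ^2).toNNReal ≠ 0 := by
  simp only [ne_eq, Real.toNNReal_eq_zero, not_le]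
  positivity

lemma coe_toNNReal_sq {σ : ℝ} (hσ : 0 < σ) : (((σ^2).toNNReal : ℝ≥0) : ℝ) = σ^2 :=
  Real.coe_toNNReal _ (sq_nonneg σ)

lemma prod_mgf {Ω : Type*} [MeasurableSpace Ω] (P : Measure Ω) [IsProbabilityMeasure P]
    {σx σy : ℝ} (hσx : 0 < σx) (hσy : 0 < σy) {Xi Yi : Ω → ℝ}
    (hmX : Measurable Xi) (hmY : Measurable Yi)
    (hXd : P.map Xi = gaussianReal 0 (Real.toNNReal (σx ^ 2)))
    (hYd : P.map Yi = gaussianReal 0 (Real.toNNReal (σy ^ 2)))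
    (hXY : IndepFun Xi Yi P) {l : ℝ} (hl : l ^ 2 * (σx ^ 2 * σy ^ 2) < 1) :
    Integrable (fun ω => exp (l * (Xi ω * Yi ω))) P ∧
      ∫ ω, exp (l * (Xi ω * Yi ω)) ∂P = (√(1 - l ^ 2 * (σx ^ 2 * σy ^ 2)))⁻¹ := by
  set vx := Real.toNNReal (σx ^ 2) with hvxdef
  set vy := Real.toNNReal (σy ^ 2) with hvydef
  have hvx : vx ≠ 0 := toNNReal_sq_ne_zero hσx
  have hvy : vy ≠ 0 := toNNReal_sq_ne_zero hσy
  have hcx : ((vx : ℝ≥0) : ℝ) = σx ^ 2 := coe_toNNReal_sq hσx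
  have hcy : ((vy : ℝ≥0) : ℝ) = σy ^ 2 := coe_toNNReal_sq hσy
  have hpair : P.map (fun ω => (Xi ω, Yi ω)) = (gaussianReal 0 vx).prod (gaussianReal 0 vy) := by
    rw [(indepFun_iff_map_prod_eq_prod_map_map hmX.aemeasurable hmY.aemeasurable).mp hXY,
      hXd, hYd]
  set F : ℝ × ℝ → ℝ := fun p => exp (l * (p.1 * p.2)) with hF
  have hFm : Measurable F := (measurable_const.mul (measurable_fst.mul measurable_snd)).exp
  -- inner integrability wrt y
  have hinner : ∀ x : ℝ, Integrable (fun y => F (x, y)) (gaussianReal 0 vy) := by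
    intro x
    have := gauss_quad_int hvy (c := 0) (l * x) (by simp)
    refine this.congr (Filter.Eventually.of_forall fun y => ?_)
    simp [hF]; ring_nf
  have hinnerval : ∀ x : ℝ, ∫ y, F (x, y) ∂(gaussianReal 0 vy)
      = exp ((l ^ 2 * σy ^ 2 / 2) * x ^ 2) := by
    intro x
    have h0 : (fun y => F (x, y)) = fun y => exp ((0:ℝ) * y ^ 2 + (l * x) * y) := by
      funext y; simp [hF]; ring_nf
    rw [h0, gauss_quad_val hvy (c := 0) (l * x) (by simp)]
    simp [hcy]
    ring_nf
  have hcsq : 2 * (l ^ 2 * σy ^ 2 / 2) * ((vx : ℝ≥0) : ℝ) < 1 := by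
    rw [hcx]; nlinarith [hl]
  have houter : Integrable (fun x => exp ((l ^ 2 * σy ^ 2 / 2) * x ^ 2)) (gaussianReal 0 vx) := by
    have := gauss_quad_int hvx (c := l ^ 2 * σy ^ 2 / 2) 0 hcsq
    refine this.congr (Filter.Eventually.of_forall fun x => ?_)
    simp
  have hFint : Integrable F ((gaussianReal 0 vx).prod (gaussianReal 0 vy)) := by
    rw [integrable_prod_iff hFm.aestronglyMeasurable]
    refine ⟨Filter.Eventually.of_forall hinner, ?_⟩
    refine houter.congr (Filter.Eventually.of_forall fun x => ?_)
    show exp ((l ^ 2 * σy ^ 2 / 2) * x ^ 2) = ∫ y, ‖F (x, y)‖ ∂(gaussianReal 0 vy)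
    rw [← hinnerval x]
    exact (integral_congr_ae (Filter.Eventually.of_forall fun y =>
      (Real.norm_of_nonneg (exp_pos _).le : ‖F (x, y)‖ = F (x, y)))).symm
  have hFval : ∫ p, F p ∂((gaussianReal 0 vx).prod (gaussianReal 0 vy))
      = (√(1 - l ^ 2 * (σx ^ 2 * σy ^ 2)))⁻¹ := by
    rw [integral_prod F hFint]
    calc ∫ x, ∫ y, F (x, y) ∂(gaussianReal 0 vy) ∂(gaussianReal 0 vx)
        = ∫ x, exp ((l ^ 2 * σy ^ 2 / 2) * x ^ 2 + 0 * x) ∂(gaussianReal 0 vx) := by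
          refine integral_congr_ae (Filter.Eventually.of_forall fun x => ?_)
          show ∫ y, F (x, y) ∂(gaussianReal 0 vy) = _
          rw [hinnerval x]; ring_nf
      _ = (√(1 - l ^ 2 * (σx ^ 2 * σy ^ 2)))⁻¹ := by
          rw [gauss_quad_val hvx (c := l ^ 2 * σy ^ 2 / 2) 0 hcsq]
          rw [hcx]
          norm_num
          ring_nf
  have hmeaspair : Measurable (fun ω => (Xi ω, Yi ω)) := hmX.prodMk hmY
  constructor
  · have := (integrable_map_measure (hpair ▸ hFm.aestronglyMeasurable :
      AEStronglyMeasurable F (P.map (fun ω => (Xi ω, Yi ω)))) hmeaspair.aemeasurable).mp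
      (hpair ▸ hFint)
    exact this
  · rw [show (fun ω => exp (l * (Xi ω * Yi ω))) = fun ω => F (Xi ω, Yi ω) from rfl]
    rw [← integral_map hmeaspair.aemeasurable (hpair ▸ hFm.aestronglyMeasurable), hpair, hFval]

lemma indep_Z_sum {Ω : Type*} [MeasurableSpace Ω] {P : Measure Ω} {k : ℕ}
    {X Y : Fin k → Ω → ℝ} (hmX : ∀ i, Measurable (X i)) (hmY : ∀ i, Measurable (Y i))
    (hindep : iIndepFun
      (Sum.elim X Y : Fin k ⊕ Fin k → Ω → ℝ) P)
    {i : Fin k} {s : Finset (Fin k)} (hi : i ∉ s) :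
    IndepFun (fun ω => X i ω * Y i ω) (fun ω => ∑ j ∈ s, X j ω * Y j ω) P := by
  classical
  set S : Finset (Fin k ⊕ Fin k) := {Sum.inl i, Sum.inr i} with hS
  set T : Finset (Fin k ⊕ Fin k) := s.image Sum.inl ∪ s.image Sum.inr with hT
  have hdisj : Disjoint S T := by
    rw [Finset.disjoint_left]
    intro a haS haT
    rw [hS] at haS
    rw [hT, Finset.mem_union] at haT
    simp only [Finset.mem_insert, Finset.mem_singleton] at haS
    rcases haT with h | h <;> rw [Finset.mem_image] at h <;> obtain ⟨j, hj, rfl⟩ := h <;>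
      rcases haS with h' | h' <;> simp_all
  have hmeas : ∀ j, Measurable (Sum.elim X Y j : Ω → ℝ) := by
    rintro (a | b)
    · exact hmX a
    · exact hmY b
  have base := iIndepFun.indepFun_finset S T hdisj hindep hmeas
  have hiS1 : (Sum.inl i : Fin k ⊕ Fin k) ∈ S := by simp [hS]
  have hiS2 : (Sum.inr i : Fin k ⊕ Fin k) ∈ S := by simp [hS]
  set φ : (S → ℝ) → ℝ := fun g => g ⟨Sum.inl i, hiS1⟩ * g ⟨Sum.inr i, hiS2⟩ with hφ
  set ψ : (T → ℝ) → ℝ := fun g => ∑ j ∈ s.attach,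
      g ⟨Sum.inl j.1, Finset.mem_union_left _ (Finset.mem_image_of_mem _ j.2)⟩ *
      g ⟨Sum.inr j.1, Finset.mem_union_right _ (Finset.mem_image_of_mem _ j.2)⟩ with hψ
  have hφm : Measurable φ := (measurable_pi_apply _).mul (measurable_pi_apply _)
  have hψm : Measurable ψ :=
    Finset.measurable_sum _ fun j _ => (measurable_pi_apply _).mul (measurable_pi_apply _)
  have := base.comp hφm hψm
  have h2 : (ψ ∘ fun ω (j : T) => Sum.elim X Y (j : Fin k ⊕ Fin k) ω)
      = fun ω => ∑ j ∈ s, X j ω * Y j ω := by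
    funext ω
    exact Finset.sum_attach s fun j => X j ω * Y j ω
  rwa [h2] at this

lemma sum_exp_int_val {Ω : Type*} [MeasurableSpace Ω] (P : Measure Ω) [IsProbabilityMeasure P]
    {k : ℕ} {σx σy : ℝ} (hσx : 0 < σx) (hσy : 0 < σy) {X Y : Fin k → Ω → ℝ}
    (hmX : ∀ i, Measurable (X i)) (hmY : ∀ i, Measurable (Y i))
    (hXd : ∀ i, P.map (X i) = gaussianReal 0 (Real.toNNReal (σx ^ 2)))
    (hYd : ∀ i, P.map (Y i) = gaussianReal 0 (Real.toNNReal (σy ^ 2)))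
    (hindep : iIndepFun
      (Sum.elim X Y : Fin k ⊕ Fin k → Ω → ℝ) P)
    {l : ℝ} (hl : l ^ 2 * (σx ^ 2 * σy ^ 2) < 1) (s : Finset (Fin k)) :
    Integrable (fun ω => exp (l * ∑ i ∈ s, X i ω * Y i ω)) P ∧
      ∫ ω, exp (l * ∑ i ∈ s, X i ω * Y i ω) ∂P
        = ((√(1 - l ^ 2 * (σx ^ 2 * σy ^ 2)))⁻¹) ^ s.card := by
  classical
  induction s using Finset.induction_on with
  | empty => simp
  | insert _ _ hi =>
    rename_i i s ih
    have hone : IndepFun (X i) (Y i) P :=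
      hindep.indepFun (show (Sum.inl i : Fin k ⊕ Fin k) ≠ Sum.inr i by simp)
    have hP1 := prod_mgf P hσx hσy (hmX i) (hmY i) (hXd i) (hYd i) hone hl
    have hZ : IndepFun (fun ω => X i ω * Y i ω) (fun ω => ∑ j ∈ s, X j ω * Y j ω) P :=
      indep_Z_sum hmX hmY hindep hi
    have hexp : IndepFun (fun ω => exp (l * (X i ω * Y i ω)))
        (fun ω => exp (l * ∑ j ∈ s, X j ω * Y j ω)) P :=
      hZ.comp (measurable_const.mul measurable_id).exp (measurable_const.mul measurable_id).exp
    have hsplit : (fun ω => exp (l * ∑ j ∈ insert i s, X j ω * Y j ω))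
        = fun ω => exp (l * (X i ω * Y i ω)) * exp (l * ∑ j ∈ s, X j ω * Y j ω) := by
      funext ω
      rw [Finset.sum_insert hi, mul_add, exp_add]
    constructor
    · rw [hsplit]
      exact hexp.integrable_mul hP1.1 ih.1
    · rw [hsplit]
      have := hexp.integral_mul_eq_mul_integral ((measurable_const.mul ((hmX i).mul (hmY i))).exp).aestronglyMeasurable
        ((measurable_const.mul (Finset.measurable_sum _ fun j _ => (hmX j).mul (hmY j))).exp).aestronglyMeasurable
      rw [show (fun ω => exp (l * (X i ω * Y i ω)) * exp (l * ∑ j ∈ s, X j ω * Y j ω))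
          = (fun ω => exp (l * (X i ω * Y i ω))) * (fun ω => exp (l * ∑ j ∈ s, X j ω * Y j ω))
          from rfl, this, hP1.2, ih.2, Finset.card_insert_of_notMem hi, pow_succ]
      ring

lemma sqrt_inv_le_exp {u : ℝ} (hu0 : 0 < u) (hu1 : u < 1) :
    (√(1 - u ^ 2))⁻¹ ≤ exp (u ^ 2 / (2 * (1 - u))) := by
  have h1u : 0 < 1 - u := by linarith
  have huu : 0 < 1 - u ^ 2 := by nlinarith
  have hx : (1 - u ^ 2) * (u ^ 2 / (1 - u) + 1) = 1 + u ^ 3 := by field_simp; ring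
  have h2 : 1 ≤ (1 - u ^ 2) * exp (u ^ 2 / (1 - u)) := by
    calc (1:ℝ) ≤ 1 + u ^ 3 := by nlinarith
    _ = (1 - u ^ 2) * (u ^ 2 / (1 - u) + 1) := hx.symm
    _ ≤ (1 - u ^ 2) * exp (u ^ 2 / (1 - u)) :=
        mul_le_mul_of_nonneg_left (Real.add_one_le_exp _) huu.le
  have key : exp (-(u ^ 2 / (1 - u))) ≤ 1 - u ^ 2 := by
    rw [exp_neg, inv_eq_one_div, div_le_iff₀ (exp_pos _)]
    linarith
  have hs : exp (-(u ^ 2 / (2 * (1 - u)))) ≤ √(1 - u ^ 2) := by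
    have h3 : -(u ^ 2 / (2 * (1 - u))) = -(u ^ 2 / (1 - u)) / 2 := by
      rw [mul_comm 2 (1 - u), ← div_div, neg_div]
    rw [h3, Real.exp_half]
    exact Real.sqrt_le_sqrt key
  have := inv_anti₀ (exp_pos _) hs
  rwa [← Real.exp_neg, neg_neg] at this

/-- for jointly independent zero-mean Gaussians `x₁,…,x_k` (variance σ_x²)
and `y₁,…,y_k` (variance σ_y²), for every `t > 0`,
`P(|Σ xᵢ yᵢ| ≥ t) ≤ 2 exp(−t²/(2σ_xσ_y(2σ_xσ_y k + t)))`. -/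
theorem gaussian_product_sum_tail_bound
    {Ω : Type*} [MeasureSpace Ω] (P : Measure Ω) [IsProbabilityMeasure P]
    (k : ℕ) (hk : 0 < k) (σx σy : ℝ) (hσx : 0 < σx) (hσy : 0 < σy)
    (X Y : Fin k → Ω → ℝ)
    (hmX : ∀ i, Measurable (X i)) (hmY : ∀ i, Measurable (Y i))
    (hXd : ∀ i, P.map (X i) = gaussianReal 0 (Real.toNNReal (σx ^ 2)))
    (hYd : ∀ i, P.map (Y i) = gaussianReal 0 (Real.toNNReal (σy ^ 2)))
    (hindep : iIndepFun
      (Sum.elim X Y : Fin k ⊕ Fin k → Ω → ℝ) P)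
    (t : ℝ) (ht : 0 < t) :
    P {ω | t ≤ |∑ i, X i ω * Y i ω|} ≤
      ENNReal.ofReal
        (2 * Real.exp (-(t ^ 2) / (2 * σx * σy * (2 * σx * σy * k + t)))) := by
  classical
  set a : ℝ := σx * σy with ha_def
  have ha : 0 < a := mul_pos hσx hσy
  have hkR : (0:ℝ) < (k:ℝ) := by exact_mod_cast hk
  set D : ℝ := 2 * a * k + t with hD_def
  have hD : 0 < D := by positivity
  set l : ℝ := t / (a * D) with hl_def
  have hlpos : 0 < l := by positivity
  set u : ℝ := t / D with hu_def
  have hu : l * a = u := by rw [hl_def, hu_def]; field_simp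
  have hu0 : 0 < u := by positivity
  have hu1 : u < 1 := by
    rw [hu_def, div_lt_one hD, hD_def]
    nlinarith
  have hsq : l ^ 2 * (σx ^ 2 * σy ^ 2) = u ^ 2 := by
    rw [← hu]; rw [ha_def]; ring
  have hl2 : l ^ 2 * (σx ^ 2 * σy ^ 2) < 1 := by
    rw [hsq]; nlinarith
  have hl2' : (-l) ^ 2 * (σx ^ 2 * σy ^ 2) < 1 := by rwa [neg_sq]
  set S : Ω → ℝ := fun ω => ∑ i, X i ω * Y i ω with hS_def
  set c : ℝ := (√(1 - u ^ 2))⁻¹ with hc_def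
  have hc0 : 0 ≤ c := by positivity
  -- mgf facts
  have hpos := sum_exp_int_val P hσx hσy hmX hmY hXd hYd hindep hl2 Finset.univ
  have hneg := sum_exp_int_val P hσx hσy hmX hmY hXd hYd hindep hl2' Finset.univ
  have hcard : (Finset.univ : Finset (Fin k)).card = k := by simp
  -- exponent bound
  set E : ℝ := Real.exp (-(t ^ 2) / (2 * σx * σy * (2 * σx * σy * k + t))) with hE_def
  have hckE : Real.exp (-l * t) * c ^ k ≤ E := by
    have h1 : c ≤ Real.exp (u ^ 2 / (2 * (1 - u))) := sqrt_inv_le_exp hu0 hu1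
    have h2 : c ^ k ≤ Real.exp ((k : ℝ) * (u ^ 2 / (2 * (1 - u)))) := by
      rw [Real.exp_nat_mul]
      exact pow_le_pow_left₀ hc0 h1 k
    have h1u : 1 - u = 2 * a * k / D := by
      rw [hu_def, hD_def]; field_simp; ring
    have h3 : -l * t + (k : ℝ) * (u ^ 2 / (2 * (1 - u))) = -3 * t ^ 2 / (4 * a * D) := by
      rw [h1u, hu_def, hl_def]
      field_simp
      ring
    have h4 : -3 * t ^ 2 / (4 * a * D) ≤ -(t ^ 2) / (2 * σx * σy * (2 * σx * σy * k + t)) := by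
      have he : 2 * σx * σy * (2 * σx * σy * (k:ℝ) + t) = 2 * a * D := by
        rw [ha_def, hD_def]; ring
      rw [he, div_le_div_iff₀ (by positivity) (by positivity)]
      nlinarith [mul_nonneg (mul_nonneg ha.le hD.le) (sq_nonneg t)]
    calc Real.exp (-l * t) * c ^ k
        ≤ Real.exp (-l * t) * Real.exp ((k : ℝ) * (u ^ 2 / (2 * (1 - u)))) := by
          exact mul_le_mul_of_nonneg_left h2 (Real.exp_pos _).le
      _ = Real.exp (-l * t + (k : ℝ) * (u ^ 2 / (2 * (1 - u)))) := (Real.exp_add _ _).symm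
      _ ≤ E := by
          rw [hE_def, h3]
          exact Real.exp_le_exp.mpr h4
  -- Chernoff bounds
  have hup : (P {ω | t ≤ S ω}).toReal ≤ E := by
    have h := measure_ge_le_exp_mul_mgf (μ := P) (X := S) (t := l) t hlpos.le hpos.1
    refine h.trans ?_
    have hm : mgf S P l = c ^ k := by
      rw [mgf]
      rw [hpos.2, hcard, hc_def, hsq]
    rw [hm]
    exact hckE
  have hlo : (P {ω | S ω ≤ -t}).toReal ≤ E := by
    have h := measure_le_le_exp_mul_mgf (μ := P) (X := S) (t := -l) (-t)
      (neg_nonpos.mpr hlpos.le) hneg.1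
    refine h.trans ?_
    have hm : mgf S P (-l) = c ^ k := by
      rw [mgf]
      rw [hneg.2, hcard, hc_def, neg_sq, hsq]
    rw [hm, neg_neg, show l * -t = -l * t from by ring]
    exact hckE
  -- assemble
  have hsub : {ω | t ≤ |S ω|} ⊆ {ω | t ≤ S ω} ∪ {ω | S ω ≤ -t} := by
    intro ω h
    simp only [Set.mem_setOf_eq] at h
    rcases le_abs.mp h with h' | h'
    · exact Or.inl h'
    · exact Or.inr (by simp only [Set.mem_setOf_eq]; linarith)
  calc P {ω | t ≤ |S ω|} ≤ P ({ω | t ≤ S ω} ∪ {ω | S ω ≤ -t}) := measure_mono hsub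
    _ ≤ P {ω | t ≤ S ω} + P {ω | S ω ≤ -t} := measure_union_le _ _
    _ ≤ ENNReal.ofReal E + ENNReal.ofReal E := by
        gcongr
        · rw [← ENNReal.ofReal_toReal (measure_ne_top P _)]
          exact ENNReal.ofReal_le_ofReal hup
        · rw [← ENNReal.ofReal_toReal (measure_ne_top P _)]
          exact ENNReal.ofReal_le_ofReal hlo
    _ = ENNReal.ofReal (2 * E) := by
        have hE0 : 0 ≤ E := by rw [hE_def]; positivity
        rw [two_mul, ENNReal.ofReal_add hE0 hE0]
end
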